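/- Let d ≥ 2 and Ω = (0,1)^d. For u ∈ H¹₀(Ω;ℝ^d) and χ ∈ L²(Ω;ℝ^{d×d}_{diag}) (diagonal-matrix-valued), extended one-periodically, the elastic energy E_{el}(u,χ) = ∫_Ω |∇u−χ|² dx satisfies E_{el}(u,χ) ≥ |χ̂(0)|² + Σ_{k ∈ ℤ^d\{0}} Σ_{j=1}^d ((|k|²−k_j²)/|k|²) |χ̂_{jj}(k)|². -/

import Mathlib

open MeasureTheory
open scoped ENNReal RealInnerProductSpace

noncomputable section

abbrev Euc (d : ℕ) : Type := EuclideanSpace ℝ (Fin d)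
abbrev Mtx (d : ℕ) : Type := EuclideanSpace ℝ (Fin d × Fin d)

/-- The open unit cube `(0,1)^d`. -/
def cube (d : ℕ) : Set (Euc d) := {x | ∀ i, x i ∈ Set.Ioo (0:ℝ) 1}

def esingle {d : ℕ} (j : Fin d) : Euc d := EuclideanSpace.single j 1

def mkEuc {d : ℕ} (f : Fin d → ℝ) : Euc d := (WithLp.equiv 2 _).symm f

def mkMtx {d : ℕ} (f : Fin d → Fin d → ℝ) : Mtx d :=
  (WithLp.equiv 2 _).symm (fun p => f p.1 p.2)

/-- Matrix-vector multiplication `A ⬝ x`. -/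
def mvec {d : ℕ} (A : Mtx d) (x : Euc d) : Euc d := mkEuc (fun i => ∑ j, A (i, j) * x j)

def diagM {d : ℕ} (c : Fin d → ℝ) : Mtx d := mkMtx (fun i j => if i = j then c i else 0)

/-- Anisotropic (directional) total variation `‖D_ν f‖_{TV(Ω)}` of a scalar function,
defined by duality against `C¹_c(Ω)` test functions bounded by one. -/
def dirTVs {d : ℕ} (Ω : Set (Euc d)) (ν : Euc d) (f : Euc d → ℝ) : ℝ≥0∞ :=
  ⨆ φ : {φ : Euc d → ℝ // ContDiff ℝ 1 φ ∧ HasCompactSupport φ ∧ tsupport φ ⊆ Ω ∧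
      ∀ x, |φ x| ≤ 1},
    ENNReal.ofReal (∫ x in Ω, f x * fderiv ℝ φ.1 x ν)

/-- Anisotropic (directional) total variation of a vector-valued function. -/
def dirTV {d : ℕ} {ι : Type} [Fintype ι] (Ω : Set (Euc d)) (ν : Euc d)
    (f : Euc d → EuclideanSpace ℝ ι) : ℝ≥0∞ :=
  ⨆ φ : {φ : Euc d → EuclideanSpace ℝ ι // ContDiff ℝ 1 φ ∧ HasCompactSupport φ ∧
      tsupport φ ⊆ Ω ∧ ∀ x, ‖φ x‖ ≤ 1},
    ENNReal.ofReal (∫ x in Ω, ⟪f x, fderiv ℝ φ.1 x ν⟫)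

/-- Full (isotropic) total variation `‖Df‖_{TV(Ω)}` of a scalar function. -/
def fullTVs {d : ℕ} (Ω : Set (Euc d)) (f : Euc d → ℝ) : ℝ≥0∞ :=
  ⨆ Φ : {Φ : Fin d → Euc d → ℝ //
      (∀ k, ContDiff ℝ 1 (Φ k) ∧ HasCompactSupport (Φ k) ∧ tsupport (Φ k) ⊆ Ω) ∧
      ∀ x, ∑ k, (Φ k x) ^ 2 ≤ 1},
    ENNReal.ofReal (∫ x in Ω, ∑ k, f x * fderiv ℝ (Φ.1 k) x (esingle k))

/-- Full (isotropic) total variation of a vector-valued function. -/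
def fullTV {d : ℕ} {ι : Type} [Fintype ι] (Ω : Set (Euc d))
    (f : Euc d → EuclideanSpace ℝ ι) : ℝ≥0∞ :=
  ⨆ Φ : {Φ : Fin d → Euc d → EuclideanSpace ℝ ι //
      (∀ k, ContDiff ℝ 1 (Φ k) ∧ HasCompactSupport (Φ k) ∧ tsupport (Φ k) ⊆ Ω) ∧
      ∀ x, ∑ k, ‖Φ k x‖ ^ 2 ≤ 1},
    ENNReal.ofReal (∫ x in Ω, ∑ k, ⟪f x, fderiv ℝ (Φ.1 k) x (esingle k)⟫)

/-- `f ∈ BV_ν(Ω)`, scalar-valued. -/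
def MemBVds {d : ℕ} (Ω : Set (Euc d)) (ν : Euc d) (f : Euc d → ℝ) : Prop :=
  IntegrableOn f Ω volume ∧ dirTVs Ω ν f ≠ ⊤

/-- `f ∈ BV_ν(Ω)`, vector-valued. -/
def MemBVd {d : ℕ} {ι : Type} [Fintype ι] (Ω : Set (Euc d)) (ν : Euc d)
    (f : Euc d → EuclideanSpace ℝ ι) : Prop :=
  IntegrableOn f Ω volume ∧ dirTV Ω ν f ≠ ⊤

/-- `G` is the (componentwise) distributional/weak gradient of `u` on `U` :
for all smooth compactly supported test functions `φ` with support in `U`,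
`∫ u_i ∂_j φ = - ∫ φ G_{ij}`. -/
def IsWeakGrad {d m : ℕ} (U : Set (Euc d)) (u : Euc d → Euc m)
    (G : Euc d → EuclideanSpace ℝ (Fin m × Fin d)) : Prop :=
  ∀ φ : Euc d → ℝ, ContDiff ℝ (⊤ : ℕ∞) φ → HasCompactSupport φ → tsupport φ ⊆ U →
    ∀ i j, ∫ x in U, u x i * fderiv ℝ φ x (esingle j) = - ∫ x in U, φ x * G x (i, j)

/-- weak gradient of a scalar function. -/
def IsWeakGradS {d : ℕ} (U : Set (Euc d)) (v : Euc d → ℝ) (g : Euc d → Euc d) : Prop :=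
  ∀ φ : Euc d → ℝ, ContDiff ℝ (⊤ : ℕ∞) φ → HasCompactSupport φ → tsupport φ ⊆ U →
    ∀ j, ∫ x in U, v x * fderiv ℝ φ x (esingle j) = - ∫ x in U, φ x * g x j

/-- `g = ∂_ν v` weakly on `U`, scalar-valued. -/
def IsWeakDirDs {d : ℕ} (U : Set (Euc d)) (ν : Euc d) (v g : Euc d → ℝ) : Prop :=
  ∀ φ : Euc d → ℝ, ContDiff ℝ (⊤ : ℕ∞) φ → HasCompactSupport φ → tsupport φ ⊆ U →
    ∫ x in U, v x * fderiv ℝ φ x ν = - ∫ x in U, φ x * g x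

/-- `g = ∂_ν v` weakly on `U`, vector-valued. -/
def IsWeakDirDV {d : ℕ} {ι : Type} [Fintype ι] (U : Set (Euc d)) (ν : Euc d)
    (v g : Euc d → EuclideanSpace ℝ ι) : Prop :=
  ∀ φ : Euc d → ℝ, ContDiff ℝ (⊤ : ℕ∞) φ → HasCompactSupport φ → tsupport φ ⊆ U →
    ∀ a, ∫ x in U, v x a * fderiv ℝ φ x ν = - ∫ x in U, φ x * g x a

/-- The admissible class `𝒜_F`: `u ∈ H¹(Ω;ℝ^d)` with boundary values `u(x) = Fx` on `∂Ω`,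
encoded by extending `u` by the affine map `x ↦ Fx` outside `Ω` and requiring a global
weak gradient `G` (with `G = F` outside `Ω`) which is square integrable on `Ω`. -/
def MemA {d : ℕ} (Ω : Set (Euc d)) (F : Mtx d) (u : Euc d → Euc d)
    (G : Euc d → Mtx d) : Prop :=
  IsWeakGrad Set.univ u G ∧ (∀ x, x ∉ Ω → u x = mvec F x) ∧ (∀ x, x ∉ Ω → G x = F) ∧
  LocallyIntegrable u volume ∧ MemLp G 2 (volume.restrict Ω)

/-- The class `H¹₀(Ω;ℝ^d)` (with weak gradient `G`). -/
def MemH10 {d : ℕ} (Ω : Set (Euc d)) (u : Euc d → Euc d)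
    (G : Euc d → Mtx d) : Prop :=
  IsWeakGrad Set.univ u G ∧ (∀ x, x ∉ Ω → u x = 0) ∧ (∀ x, x ∉ Ω → G x = 0) ∧
  LocallyIntegrable u volume ∧ MemLp G 2 (volume.restrict Ω)

/-- The total (sharp-interface, anisotropic) energy set:
all values `E_ε(u,χ) = ∫_Ω |∇u - χ|² dx + ε ‖D_ν χ‖_{TV(Ω)}` with `u ∈ 𝒜_F` and
`χ ∈ BV_ν(Ω; K)`, over `Ω = (0,1)^d`. -/
def engS {d : ℕ} (ν : Euc d) (K : Set (Mtx d)) (F : Mtx d) (ε : ℝ) : Set ℝ :=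
  {r : ℝ | ∃ u G χ, MemA (cube d) F u G ∧ (∀ x, χ x ∈ K) ∧ MemBVd (cube d) ν χ ∧
    r = (∫ x in cube d, ‖G x - χ x‖ ^ 2) + ε * (dirTV (cube d) ν χ).toReal}

/-! Fourier analysis on the unit cell -/

def kdot {d : ℕ} (k : Fin d → ℤ) (ν : Euc d) : ℝ := ∑ i, (k i : ℝ) * ν i

def knorm {d : ℕ} (k : Fin d → ℤ) : ℝ := Real.sqrt (∑ i, ((k i : ℝ)) ^ 2)

/-- Fourier coefficient (of the one-periodic extension) of a scalar function on `(0,1)^d`. -/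
def fCoeffS {d : ℕ} (f : Euc d → ℝ) (k : Fin d → ℤ) : ℂ :=
  ∫ x in cube d, (f x : ℂ) *
    Complex.exp (-(2 * (Real.pi : ℂ) * Complex.I) * (∑ i, (k i : ℂ) * ((x i : ℝ) : ℂ)))

/-- `|f̂(k)|²` for a vector-valued `f`. -/
def coeffSq {d : ℕ} {ι : Type} [Fintype ι] (f : Euc d → EuclideanSpace ℝ ι)
    (k : Fin d → ℤ) : ℝ :=
  ∑ a, ‖fCoeffS (fun x => f x a) k‖ ^ 2

/-- Fourier multiplier `m(D)` applied to a (one-periodically extended) scalar function. -/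
def applyM {d : ℕ} (m : (Fin d → ℤ) → ℝ) (f : Euc d → ℝ) (x : Euc d) : ℝ :=
  (∑' k : Fin d → ℤ, (m k : ℂ) * fCoeffS f k *
    Complex.exp ((2 * (Real.pi : ℂ) * Complex.I) * (∑ i, (k i : ℂ) * ((x i : ℝ) : ℂ)))).re

/-- membership in the truncated cone `C_{j,μ,λ}`. -/
def inConeT {d : ℕ} (j : Fin d) (μ ν1 lam : ℝ) (k : Fin d → ℤ) : Prop :=
  knorm k ^ 2 - ((k j : ℝ)) ^ 2 ≤ μ ^ 2 * knorm k ^ 2 ∧ |((k j : ℝ))| ≤ (2 / |ν1|) * lam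

/-- membership in the cone `C_{j,μ}`. -/
def inCone {d : ℕ} (j : Fin d) (μ : ℝ) (k : Fin d → ℤ) : Prop :=
  knorm k ^ 2 - ((k j : ℝ)) ^ 2 ≤ μ ^ 2 * knorm k ^ 2

/-- admissible smooth cut-off `φ` for the multipliers. -/
def cutOK (φc : ℝ → ℝ) : Prop :=
  ContDiff ℝ (⊤ : ℕ∞) φc ∧ (∀ x, 0 ≤ φc x ∧ φc x ≤ 1) ∧
  (∀ x ∈ Set.Icc (0:ℝ) 1, φc x = 1) ∧ (∀ x ∈ Set.Icc (0:ℝ) 1, deriv φc x ≤ 0) ∧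
  (∀ x, 2 ≤ x → φc x = 0)

/-- the symbol `m_{j,μ}`. -/
def msymb {d : ℕ} (φc : ℝ → ℝ) (j : Fin d) (μ : ℝ) (k : Fin d → ℤ) : ℝ :=
  (1 - φc (2 * knorm k)) *
    φc (Real.sqrt (knorm k ^ 2 - ((k j : ℝ)) ^ 2) / (μ * knorm k)) + φc (2 * knorm k)

/-- the symbol `m_{j,μ,λ}` (with the truncation scale `2λ/|ν₁|`). -/
def msymbT {d : ℕ} (φc : ℝ → ℝ) (ν1 : ℝ) (j : Fin d) (μ lam : ℝ) (k : Fin d → ℤ) : ℝ :=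
  (1 - φc (2 * knorm k)) *
    φc (Real.sqrt (knorm k ^ 2 - ((k j : ℝ)) ^ 2) / (μ * knorm k)) *
    φc (|ν1| * |((k j : ℝ))| / (2 * lam)) + φc (2 * knorm k)

/-- the `L²((0,1)^d)` norm. -/
def L2c {d : ℕ} (f : Euc d → ℝ) : ℝ := (eLpNorm f 2 (volume.restrict (cube d))).toReal

/-- `ψ_t(x) = max{|x|, |x|^t}`. -/
def psi (t x : ℝ) : ℝ := max |x| (|x| ^ t)

/-- infimum of the elastic energy over `u ∈ H¹₀((0,1)^d; ℝ^d)`. -/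
def elInf (d : ℕ) (χ : Euc d → Mtx d) : ℝ :=
  sInf {r : ℝ | ∃ u G, MemH10 (cube d) u G ∧ r = ∫ x in cube d, ‖G x - χ x‖ ^ 2}

/-! the diagonal wells `𝒦_N` and the laminates of order `ℓ` -/

/-- the well `A_{m+1}` of `𝒦_N` : diagonal entries `1/2, …, 1/2, 1, 0, …, 0` with the `1`
in the `m`-th diagonal position (so `KNwell d 0 = 0`, `KNwell d 1 = diag(1,0,…,0)`, …). -/
def KNwell (d m : ℕ) : Mtx d :=
  mkMtx (fun i j => if i = j then
    (if (i : ℕ) + 1 = m then 1 else if (i : ℕ) + 1 < m then (1/2 : ℝ) else 0) else 0)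

def KNset (d N : ℕ) : Set (Mtx d) := {M | ∃ m, m < N ∧ M = KNwell d m}

/-- an order-`ℓ` laminate `diag(1/2,…,1/2,α,0,…,0)` with `ℓ-1` entries `1/2` followed
by `α` in the `ℓ`-th diagonal position. -/
def lamF (d ℓ : ℕ) (α : ℝ) : Mtx d :=
  mkMtx (fun i j => if i = j then
    (if (i : ℕ) + 1 < ℓ then (1/2 : ℝ) else if (i : ℕ) + 1 = ℓ then α else 0) else 0)

/-! fractional surface energies -/

/-- `E_surf^s(χ) = (∑_{k ≠ 0} |k·ν|^{2s} |χ̂(k)|²)^{1/(2s)}`. -/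
def Esurf {d : ℕ} (s : ℝ) (ν : Euc d) (χ : Euc d → Mtx d) : ℝ :=
  (∑' k : Fin d → ℤ, Set.indicator {k : Fin d → ℤ | k ≠ 0}
      (fun k => |kdot k ν| ^ (2 * s) * coeffSq χ k) k) ^ (1 / (2 * s))

/-- `χ ∈ H^s_ν((0,1)^d)`. -/
def MemHs {d : ℕ} (s : ℝ) (ν : Euc d) (χ : Euc d → Mtx d) : Prop :=
  MemLp χ 2 (volume.restrict (cube d)) ∧
  Summable (fun k : Fin d → ℤ =>
    (1 + 4 * Real.pi ^ 2 * (kdot k ν) ^ 2) ^ s * coeffSq χ k)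

/-! the discrete set-up -/

/-- the "lower" reference triangle `T_h`. -/
def Tlow (h : ℝ) : Set (Euc 2) :=
  {x | x 0 ∈ Set.Ico 0 h ∧ x 1 ∈ Set.Ico 0 h ∧ x 1 < h - x 0}

/-- the "upper" reference triangle `T_h'`. -/
def Tup (h : ℝ) : Set (Euc 2) :=
  {x | x 0 ∈ Set.Ico 0 h ∧ x 1 ∈ Set.Ico 0 h ∧ h - x 0 ≤ x 1}

def latticePt (h : ℝ) (z : Euc 2) : Prop := ∃ m : Fin 2 → ℤ, z = mkEuc (fun i => h * (m i))

/-- the triangle `R(T + z)`. -/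
def triOf (R : Mtx 2) (z : Euc 2) (T : Set (Euc 2)) : Set (Euc 2) :=
  (fun x => mvec R (x + z)) '' T

/-- `τ` is a triangle of the triangulation `𝒯_h^R`. -/
def IsTri (h : ℝ) (R : Mtx 2) (τ : Set (Euc 2)) : Prop :=
  ∃ z, latticePt h z ∧ (τ = triOf R z (Tlow h) ∨ τ = triOf R z (Tup h))

/-- `R ∈ SO(2)`. -/
def IsSO2 (R : Mtx 2) : Prop :=
  (∀ i j : Fin 2, ∑ l, R (l, i) * R (l, j) = if i = j then 1 else 0) ∧
  R (0, 0) * R (1, 1) - R (0, 1) * R (1, 0) = 1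

/-- row-wise cross product `(v × M)_j = v₁ M_{j2} - v₂ M_{j1}`. -/
def cross2 (v : Euc 2) (M : Mtx 2) : Euc 2 :=
  mkEuc (fun j => v 0 * M (j, 1) - v 1 * M (j, 0))

/-- an open bounded polygonal domain (boundary contained in finitely many lines). -/
def IsPolygonal (Ω : Set (Euc 2)) : Prop :=
  IsOpen Ω ∧ Bornology.IsBounded Ω ∧ Ω.Nonempty ∧
  ∃ (n : ℕ) (a : Fin n → Euc 2) (c : Fin n → ℝ),
    (∀ i, a i ≠ 0) ∧ frontier Ω ⊆ ⋃ i, {x | ⟪a i, x⟫ = c i}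

/-- the admissible deformations `𝒜_{h,F}^{p,R}` (together with their piecewise gradient `G`):
`u` is continuous (equivalently `W^{1,p}_loc`), affine on each triangle of `𝒯_h^R`,
equal to `Fx` outside `Ω`, and `G` records the constant gradient on each triangle. -/
def MemAd (h : ℝ) (R : Mtx 2) (Ω : Set (Euc 2)) (F : Mtx 2)
    (u : Euc 2 → Euc 2) (G : Euc 2 → Mtx 2) : Prop :=
  Continuous u ∧ (∀ x, x ∉ Ω → u x = mvec F x) ∧
  (∀ τ, IsTri h R τ → ∃ M b, (∀ x ∈ τ, u x = mvec M x + b) ∧ (∀ x ∈ τ, G x = M))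

/-- the admissible phase indicators `𝒞_h^R`: constant on each triangle, with values in `K`. -/
def MemCd (h : ℝ) (R : Mtx 2) (K : Set (Mtx 2)) (χ : Euc 2 → Mtx 2) : Prop :=
  (∀ x, χ x ∈ K) ∧ ∀ τ, IsTri h R τ → ∃ c, ∀ x ∈ τ, χ x = c

/-- values of the discrete energy `E^p_{el,h}` over the admissible discrete classes. -/
def discS (h : ℝ) (R : Mtx 2) (Ω : Set (Euc 2)) (K : Set (Mtx 2)) (F : Mtx 2) : Set ℝ :=
  {r : ℝ | ∃ u G χ, MemAd h R Ω F u G ∧ MemCd h R K χ ∧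
    r = ∫ x in Ω, ‖G x - χ x‖ ^ 2}

/-! the Tartar square -/

def tartA : Fin 4 → Mtx 2 :=
  ![diagM ![-1, -3], diagM ![-3, 1], diagM ![1, 3], diagM ![3, -1]]

def tartJ : Fin 4 → Mtx 2 :=
  ![diagM ![-1, -1], diagM ![-1, 1], diagM ![1, 1], diagM ![1, -1]]

def T4 : Set (Mtx 2) := Set.range tartA

def T4qc : Set (Mtx 2) :=
  convexHull ℝ (Set.range tartJ) ∪ ⋃ j, segment ℝ (tartA j) (tartJ j)
/-! ### Auxiliary lemmas for `stmt10` -/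

namespace Stmt10Aux

open Complex MeasureTheory Real Set

variable {d : ℕ}

lemma cube_eq (d : ℕ) : cube d = ⋂ i, (EuclideanSpace.proj (𝕜 := ℝ) i) ⁻¹' Set.Ioo (0:ℝ) 1 := by
  ext x; simp [cube, Set.mem_iInter]

lemma isOpen_cube (d : ℕ) : IsOpen (cube d) := by
  rw [cube_eq]
  exact isOpen_iInter_of_finite fun i => isOpen_Ioo.preimage (EuclideanSpace.proj i).continuous

lemma measurableSet_cube (d : ℕ) : MeasurableSet (cube d) := (isOpen_cube d).measurableSet

lemma cube_subset_ball (d : ℕ) : cube d ⊆ Metric.closedBall (0 : Euc d) (d + 1) := by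
  intro x hx
  simp only [Metric.mem_closedBall, dist_zero_right]
  have h1 : ‖x‖ ≤ Real.sqrt d := by
    rw [EuclideanSpace.norm_eq]
    apply Real.sqrt_le_sqrt
    have : ∀ i, ‖x i‖ ^ 2 ≤ 1 := by
      intro i
      have := hx i
      rw [Real.norm_eq_abs, _root_.sq_abs]
      nlinarith [this.1, this.2]
    calc ∑ i, ‖x i‖ ^ 2 ≤ ∑ _i : Fin d, (1:ℝ) := Finset.sum_le_sum fun i _ => this i
    _ = d := by simp
  have h2 : Real.sqrt d ≤ d + 1 := by
    rw [show ((d:ℝ)+1) = Real.sqrt (((d:ℝ)+1)^2) by rw [Real.sqrt_sq (by positivity)]]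
    apply Real.sqrt_le_sqrt; nlinarith [Nat.cast_nonneg (α := ℝ) d]
  linarith

lemma volume_cube_lt_top (d : ℕ) : volume (cube d) < ⊤ :=
  lt_of_le_of_lt (measure_mono (cube_subset_ball d)) (measure_closedBall_lt_top)

instance (d : ℕ) : IsFiniteMeasure (volume.restrict (cube d)) :=
  ⟨by rw [Measure.restrict_apply_univ]; exact volume_cube_lt_top d⟩

/-- The one-dimensional oscillatory integral. -/
lemma integral_exp_Ioo (m : ℤ) :
    ∫ t in Set.Ioo (0:ℝ) 1, Complex.exp ((2 * (π:ℂ) * I) * (m:ℂ) * (t:ℝ)) =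
      if m = 0 then 1 else 0 := by
  by_cases hm : m = 0
  · simp [hm]
  · rw [if_neg hm]
    have h1 : ∫ t in Set.Ioo (0:ℝ) 1, Complex.exp ((2 * (π:ℂ) * I) * (m:ℂ) * (t:ℝ)) =
        ∫ t in (0:ℝ)..1, Complex.exp ((2 * (π:ℂ) * I) * (m:ℂ) * (t:ℝ)) := by
      rw [intervalIntegral.integral_of_le zero_le_one, MeasureTheory.integral_Ioc_eq_integral_Ioo]
    rw [h1]
    have hc : (2 * (π:ℂ) * I) * (m:ℂ) ≠ 0 :=
      mul_ne_zero (mul_ne_zero (mul_ne_zero two_ne_zero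
        (Complex.ofReal_ne_zero.mpr Real.pi_ne_zero)) I_ne_zero)
        (Int.cast_ne_zero.mpr hm)
    rw [integral_exp_mul_complex hc]
    have h2 : Complex.exp ((2 * (π:ℂ) * I) * (m:ℂ) * ((1:ℝ):ℂ)) = 1 := by
      rw [show (2 * (π:ℂ) * I) * (m:ℂ) * ((1:ℝ):ℂ) = (m:ℂ) * (2 * π * I) by push_cast; ring]
      exact Complex.exp_int_mul_two_pi_mul_I m
    rw [h2]
    simp



/-- The complex exponential `e^{2πi k·x}`. -/
def eK (k : Fin d → ℤ) (x : Euc d) : ℂ :=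
  Complex.exp ((2 * (π:ℂ) * I) * ∑ i, (k i : ℂ) * ((x i : ℝ) : ℂ))

lemma integral_exp_cube (m : Fin d → ℤ) :
    ∫ x in cube d, eK m x = if m = 0 then 1 else 0 := by
  classical
  -- transfer to the pi-type
  have e := EuclideanSpace.volume_preserving_symm_measurableEquiv_toLp (Fin d)
  have hemb : MeasurableEmbedding ((MeasurableEquiv.toLp 2 (Fin d → ℝ)).symm) :=
    ((MeasurableEquiv.toLp 2 (Fin d → ℝ)).symm).measurableEmbedding
  have hpre : ((MeasurableEquiv.toLp 2 (Fin d → ℝ)).symm) ⁻¹'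
      (Set.univ.pi fun _ : Fin d => Set.Ioo (0:ℝ) 1) = cube d := by
    ext x
    simp [cube, Set.mem_pi]
  have key := e.setIntegral_preimage_emb hemb
    (fun y : Fin d → ℝ => Complex.exp ((2 * (π:ℂ) * I) * ∑ i, (m i : ℂ) * ((y i : ℝ) : ℂ)))
    (Set.univ.pi fun _ : Fin d => Set.Ioo (0:ℝ) 1)
  rw [hpre] at key
  have hgx : ∀ x : Euc d, (fun y : Fin d → ℝ =>
      Complex.exp ((2 * (π:ℂ) * I) * ∑ i, (m i : ℂ) * ((y i : ℝ) : ℂ)))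
      (((MeasurableEquiv.toLp 2 (Fin d → ℝ)).symm) x) = eK m x := by
    intro x; rfl
  have step1 : ∫ x in cube d, eK m x =
      ∫ y in (Set.univ.pi fun _ : Fin d => Set.Ioo (0:ℝ) 1),
        Complex.exp ((2 * (π:ℂ) * I) * ∑ i, (m i : ℂ) * ((y i : ℝ) : ℂ)) := by
    rw [← key]; rfl
  rw [step1]
  -- factor the exponential
  have hfact : ∀ y : Fin d → ℝ,
      Complex.exp ((2 * (π:ℂ) * I) * ∑ i, (m i : ℂ) * ((y i : ℝ) : ℂ)) =
      ∏ i, Complex.exp ((2 * (π:ℂ) * I) * (m i : ℂ) * ((y i : ℝ) : ℂ)) := by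
    intro y
    rw [← Complex.exp_sum]
    congr 1
    rw [Finset.mul_sum]
    exact Finset.sum_congr rfl fun i _ => by ring
  simp_rw [hfact]
  -- replace the set integral by an integral of indicators
  have hms : MeasurableSet (Set.univ.pi fun _ : Fin d => Set.Ioo (0:ℝ) 1) :=
    MeasurableSet.univ_pi fun _ => measurableSet_Ioo
  rw [← MeasureTheory.integral_indicator hms]
  have hind : (Set.univ.pi fun _ : Fin d => Set.Ioo (0:ℝ) 1).indicator
      (fun y : Fin d → ℝ => ∏ i, Complex.exp ((2 * (π:ℂ) * I) * (m i : ℂ) * ((y i : ℝ) : ℂ)))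
      = fun y : Fin d → ℝ => ∏ i, (Set.Ioo (0:ℝ) 1).indicator
          (fun t : ℝ => Complex.exp ((2 * (π:ℂ) * I) * (m i : ℂ) * (t : ℂ))) (y i) := by
    funext y
    by_cases hy : y ∈ Set.univ.pi fun _ : Fin d => Set.Ioo (0:ℝ) 1
    · rw [Set.indicator_of_mem hy]
      refine Finset.prod_congr rfl fun i _ => ?_
      rw [Set.indicator_of_mem (hy i (Set.mem_univ i))]
    · rw [Set.indicator_of_notMem hy]
      rw [Set.mem_univ_pi] at hy
      push_neg at hy
      obtain ⟨i₀, hi₀⟩ := hy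
      exact (Finset.prod_eq_zero (Finset.mem_univ i₀)
        (by rw [Set.indicator_of_notMem hi₀])).symm
  rw [hind]
  rw [MeasureTheory.volume_pi, MeasureTheory.integral_fintype_prod_eq_prod (ι := Fin d)
    (f := fun i (t : ℝ) => (Set.Ioo (0:ℝ) 1).indicator
      (fun s : ℝ => Complex.exp ((2 * (π:ℂ) * I) * (m i : ℂ) * (s : ℂ))) t)]
  have hone : ∀ i, (∫ t : ℝ, (Set.Ioo (0:ℝ) 1).indicator
      (fun s : ℝ => Complex.exp ((2 * (π:ℂ) * I) * (m i : ℂ) * (s : ℂ))) t)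
      = if m i = 0 then 1 else 0 := by
    intro i
    rw [MeasureTheory.integral_indicator measurableSet_Ioo]
    exact integral_exp_Ioo (m i)
  simp_rw [hone]
  by_cases hm : m = 0
  · simp [hm]
  · rw [if_neg hm]
    obtain ⟨i₀, hi₀⟩ : ∃ i, m i ≠ 0 := by
      by_contra h
      push_neg at h
      exact hm (funext h)
    exact Finset.prod_eq_zero (Finset.mem_univ i₀) (by rw [if_neg hi₀])

/-- real phase -/
def thk (k : Fin d → ℤ) (x : Euc d) : ℝ := 2 * π * ∑ i, (k i : ℝ) * x i

lemma eK_eq (k : Fin d → ℤ) (x : Euc d) :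
    eK k x = Complex.exp ((thk k x : ℂ) * I) := by
  unfold eK thk
  congr 1
  push_cast
  ring

lemma rsum_neg (k : Fin d → ℤ) (x : Euc d) :
    (∑ i, (((-k) i : ℤ) : ℝ) * x i) = -∑ i, ((k i : ℤ) : ℝ) * x i := by
  rw [← Finset.sum_neg_distrib]
  exact Finset.sum_congr rfl fun i _ => by simp [Pi.neg_apply]

lemma csum_neg (k : Fin d → ℤ) (x : Euc d) :
    (∑ i, (((-k) i : ℤ) : ℂ) * ((x i : ℝ) : ℂ)) = -∑ i, ((k i : ℤ) : ℂ) * ((x i : ℝ) : ℂ) := by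
  rw [← Finset.sum_neg_distrib]
  exact Finset.sum_congr rfl fun i _ => by simp [Pi.neg_apply]

lemma thk_neg (k : Fin d → ℤ) (x : Euc d) : thk (-k) x = -thk k x := by
  unfold thk
  rw [rsum_neg]
  ring

lemma thk_add (k k' : Fin d → ℤ) (x : Euc d) : thk (k + k') x = thk k x + thk k' x := by
  unfold thk
  have : (∑ i, (((k + k') i : ℤ) : ℝ) * x i) =
      (∑ i, ((k i : ℤ) : ℝ) * x i) + ∑ i, ((k' i : ℤ) : ℝ) * x i := by
    rw [← Finset.sum_add_distrib]
    exact Finset.sum_congr rfl fun i _ => by simp [Pi.add_apply]; ring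
  rw [this]
  ring

lemma conj_eK (k : Fin d → ℤ) (x : Euc d) :
    (starRingEnd ℂ) (eK k x) = eK (-k) x := by
  rw [eK_eq, eK_eq, thk_neg, ← Complex.exp_conj]
  congr 1
  simp [Complex.conj_ofReal]

lemma mul_eK (k k' : Fin d → ℤ) (x : Euc d) :
    eK k x * eK k' x = eK (k + k') x := by
  rw [eK_eq, eK_eq, eK_eq, ← Complex.exp_add, thk_add]
  push_cast
  ring_nf

lemma norm_eK (k : Fin d → ℤ) (x : Euc d) : ‖eK k x‖ = 1 := by
  rw [eK_eq, Complex.norm_exp_ofReal_mul_I]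

lemma continuous_thk (k : Fin d → ℤ) : Continuous (thk k) := by
  unfold thk
  exact continuous_const.mul (continuous_finset_sum _ fun i _ =>
    continuous_const.mul (EuclideanSpace.proj (𝕜 := ℝ) i).continuous)

lemma continuous_eK (k : Fin d → ℤ) : Continuous (eK k) := by
  have : eK k = fun x => Complex.exp ((thk k x : ℂ) * I) := funext (eK_eq k)
  rw [this]
  exact Complex.continuous_exp.comp ((Complex.continuous_ofReal.comp (continuous_thk k)).mul
    continuous_const)

lemma memℒp_eK (k : Fin d → ℤ) : MemLp (eK k) 2 (volume.restrict (cube d)) :=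
  MemLp.of_bound (continuous_eK k).aestronglyMeasurable 1
    (Filter.Eventually.of_forall fun x => le_of_eq (norm_eK k x))

lemma fCoeffS_eq (f : Euc d → ℝ) (k : Fin d → ℤ) :
    fCoeffS f k = ∫ x in cube d, (f x : ℂ) * eK (-k) x := by
  unfold fCoeffS eK
  refine MeasureTheory.integral_congr_ae (Filter.Eventually.of_forall fun x => ?_)
  simp only
  congr 1
  congr 1
  rw [csum_neg]
  ring

/-- Bessel's inequality for the (scalar) Fourier coefficients on the cube. -/
lemma bessel_scalar (f : Euc d → ℝ) (hf : MemLp f 2 (volume.restrict (cube d)))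
    (S : Finset (Fin d → ℤ)) :
    ∑ k ∈ S, ‖fCoeffS f k‖ ^ 2 ≤ ∫ x in cube d, f x ^ 2 := by
  classical
  let v : (Fin d → ℤ) → Lp ℂ 2 (volume.restrict (cube d)) :=
    fun k => (memℒp_eK k).toLp (eK k)
  have hv : Orthonormal ℂ v := by
    rw [orthonormal_iff_ite]
    intro k k'
    rw [MeasureTheory.L2.inner_def]
    have : (∫ a, (inner ℂ ((v k : Lp ℂ 2 (volume.restrict (cube d))) a) ((v k') a) : ℂ)
        ∂(volume.restrict (cube d))) = ∫ a in cube d, eK (-k + k') a := by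
      refine MeasureTheory.integral_congr_ae ?_
      filter_upwards [(memℒp_eK (d := d) k).coeFn_toLp, (memℒp_eK (d := d) k').coeFn_toLp]
        with a ha1 ha2
      rw [RCLike.inner_apply, ha1, ha2, conj_eK, mul_eK, add_comm]
    rw [this, integral_exp_cube]
    by_cases h : k = k'
    · simp [h]
    · rw [if_neg h, if_neg fun hc => h (neg_add_eq_zero.mp hc)]
  let fc : Euc d → ℂ := fun x => (f x : ℂ)
  have hfc : MemLp fc 2 (volume.restrict (cube d)) := hf.ofReal
  let x₀ : Lp ℂ 2 (volume.restrict (cube d)) := hfc.toLp fc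
  have hcoeff : ∀ k, (inner ℂ (v k) x₀ : ℂ) = fCoeffS f k := by
    intro k
    rw [MeasureTheory.L2.inner_def, fCoeffS_eq]
    refine MeasureTheory.integral_congr_ae ?_
    filter_upwards [(memℒp_eK (d := d) k).coeFn_toLp, hfc.coeFn_toLp] with a h1 h2
    rw [RCLike.inner_apply, h1, h2, conj_eK]
  have hnorm : ‖x₀‖ ^ 2 = ∫ x in cube d, f x ^ 2 := by
    have h1 : (inner ℂ x₀ x₀ : ℂ) = ((∫ x in cube d, f x ^ 2 : ℝ) : ℂ) := by
      rw [MeasureTheory.L2.inner_def]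
      have heq : (∫ a, (inner ℂ ((x₀ : Lp ℂ 2 (volume.restrict (cube d))) a) ((x₀) a) : ℂ)
          ∂(volume.restrict (cube d))) =
          ∫ a in cube d, (((f a) ^ 2 : ℝ) : ℂ) := by
        refine MeasureTheory.integral_congr_ae ?_
        filter_upwards [hfc.coeFn_toLp] with a ha
        rw [RCLike.inner_apply, ha]
        show ((f a : ℝ) : ℂ) * (starRingEnd ℂ) ((f a : ℝ) : ℂ) = (((f a) ^ 2 : ℝ) : ℂ)
        rw [Complex.conj_ofReal]
        push_cast
        ring
      rw [heq]
      exact integral_ofReal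
    have h2 := inner_self_eq_norm_sq (𝕜 := ℂ) x₀
    rw [h1] at h2
    simpa using h2.symm
  calc ∑ k ∈ S, ‖fCoeffS f k‖ ^ 2 = ∑ k ∈ S, ‖(inner ℂ (v k) x₀ : ℂ)‖ ^ 2 := by
        refine Finset.sum_congr rfl fun k _ => by rw [hcoeff]
    _ ≤ ‖x₀‖ ^ 2 := hv.sum_inner_products_le x₀
    _ = _ := hnorm

/-- The linear functional `x ↦ ∑ kᵢ xᵢ`. -/
def Lk (k : Fin d → ℤ) : Euc d →L[ℝ] ℝ :=
  ∑ i, ((k i : ℝ)) • (EuclideanSpace.proj (𝕜 := ℝ) i)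

lemma Lk_apply (k : Fin d → ℤ) (x : Euc d) : Lk k x = ∑ i, (k i : ℝ) * x i := by
  simp [Lk, ContinuousLinearMap.sum_apply, smul_eq_mul]

lemma Lk_esingle (k : Fin d → ℤ) (j : Fin d) : Lk k (esingle j) = (k j : ℝ) := by
  rw [Lk_apply]
  have : ∀ i, (k i : ℝ) * (esingle (d := d) j) i = if i = j then (k i : ℝ) else 0 := by
    intro i
    rw [show (esingle (d := d) j) i = if i = j then (1:ℝ) else 0 from
      EuclideanSpace.single_apply j 1 i]
    split <;> simp
  simp_rw [this]
  simp

lemma hasFDerivAt_thk (k : Fin d → ℤ) (x : Euc d) :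
    HasFDerivAt (thk k) ((2 * π : ℝ) • Lk k) x := by
  have h : thk k = fun y => (2 * π) * Lk k y := by
    funext y
    rw [Lk_apply]
    rfl
  rw [h]
  exact (Lk k).hasFDerivAt.const_mul (2 * π)

lemma contDiff_thk (k : Fin d → ℤ) : ContDiff ℝ (⊤ : ℕ∞) (thk k) := by
  have h : thk k = fun y => (2 * π) * Lk k y := by
    funext y
    rw [Lk_apply]
    rfl
  rw [h]
  exact contDiff_const.mul (Lk k).contDiff

lemma integrableOn_u_comp {u : Euc d → Euc d} (hu : LocallyIntegrable u volume) :
    IntegrableOn u (cube d) volume := by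
  have hcl : IsCompact (closure (cube d)) := by
    refine IsCompact.of_isClosed_subset (isCompact_closedBall (0 : Euc d) (d + 1))
      isClosed_closure ?_
    exact closure_minimal (cube_subset_ball d) Metric.isClosed_closedBall
  exact (hu.integrableOn_isCompact hcl).mono_set subset_closure

lemma integrable_comp_proj {m : ℕ} {f : Euc d → Euc m}
    (hf : IntegrableOn f (cube d) volume) (i : Fin m) :
    Integrable (fun x => f x i) (volume.restrict (cube d)) := by
  have := (EuclideanSpace.proj (𝕜 := ℝ) i).integrable_comp hf
  simpa using this

lemma integrable_comp_proj' {f : Euc d → Mtx d}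
    (hf : MemLp f 2 (volume.restrict (cube d))) (a : Fin d × Fin d) :
    Integrable (fun x => f x a) (volume.restrict (cube d)) := by
  have h1 : Integrable f (volume.restrict (cube d)) := hf.integrable one_le_two
  have := (EuclideanSpace.proj (𝕜 := ℝ) a).integrable_comp h1
  simpa using this

lemma integrable_cos_mul (k : Fin d → ℤ) {f : Euc d → ℝ}
    (hf : Integrable f (volume.restrict (cube d))) :
    Integrable (fun x => Real.cos (thk k x) * f x) (volume.restrict (cube d)) :=
  hf.bdd_mul ((Real.continuous_cos.comp (continuous_thk k)).aestronglyMeasurable)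
    (c := 1) (ae_of_all _ fun x => by rw [Real.norm_eq_abs]; exact Real.abs_cos_le_one _)

lemma integrable_sin_mul (k : Fin d → ℤ) {f : Euc d → ℝ}
    (hf : Integrable f (volume.restrict (cube d))) :
    Integrable (fun x => Real.sin (thk k x) * f x) (volume.restrict (cube d)) :=
  hf.bdd_mul ((Real.continuous_sin.comp (continuous_thk k)).aestronglyMeasurable)
    (c := 1) (ae_of_all _ fun x => by rw [Real.norm_eq_abs]; exact Real.abs_sin_le_one _)

lemma eK_neg_eq (k : Fin d → ℤ) (x : Euc d) :
    eK (-k) x = ((Real.cos (thk k x) : ℝ) : ℂ) - ((Real.sin (thk k x) : ℝ) : ℂ) * I := by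
  rw [eK_eq, thk_neg, Complex.exp_mul_I, ← Complex.ofReal_cos, ← Complex.ofReal_sin,
    Real.cos_neg, Real.sin_neg]
  push_cast
  ring

/-- decomposition of a Fourier coefficient into cosine and sine parts -/
lemma fCoeffS_cos_sin (f : Euc d → ℝ) (hf : Integrable f (volume.restrict (cube d)))
    (k : Fin d → ℤ) :
    fCoeffS f k = ((∫ x in cube d, Real.cos (thk k x) * f x : ℝ) : ℂ)
      - ((∫ x in cube d, Real.sin (thk k x) * f x : ℝ) : ℂ) * I := by
  rw [fCoeffS_eq]
  have h1 : ∀ x : Euc d, (f x : ℂ) * eK (-k) x =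
      ((Real.cos (thk k x) * f x : ℝ) : ℂ) - ((Real.sin (thk k x) * f x : ℝ) : ℂ) * I := by
    intro x
    rw [eK_neg_eq]
    push_cast
    ring
  simp_rw [h1]
  have hInt1 : Integrable (fun x => ((Real.cos (thk k x) * f x : ℝ) : ℂ))
      (volume.restrict (cube d)) := (integrable_cos_mul k hf).ofReal
  have hInt2 : Integrable (fun x => ((Real.sin (thk k x) * f x : ℝ) : ℂ) * I)
      (volume.restrict (cube d)) := ((integrable_sin_mul k hf).ofReal).mul_const I
  rw [MeasureTheory.integral_sub hInt1 hInt2, MeasureTheory.integral_mul_const]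
  have hc : (∫ x in cube d, ((Real.cos (thk k x) * f x : ℝ) : ℂ)) =
      ((∫ x in cube d, Real.cos (thk k x) * f x : ℝ) : ℂ) := integral_ofReal
  have hs : (∫ x in cube d, ((Real.sin (thk k x) * f x : ℝ) : ℂ)) =
      ((∫ x in cube d, Real.sin (thk k x) * f x : ℝ) : ℂ) := integral_ofReal
  rw [hc, hs]

/-- The key identity: `Ĝ_{ij}(k) = 2πi k_j û_i(k)` for `u ∈ H¹₀` with weak gradient `G`. -/
lemma coeff_grad {u : Euc d → Euc d} {G : Euc d → Mtx d}
    (hu : MemH10 (cube d) u G) (k : Fin d → ℤ) (i j : Fin d) :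
    fCoeffS (fun x => G x (i, j)) k =
      (2 * (π : ℂ) * I) * ((k j : ℤ) : ℂ) * fCoeffS (fun x => u x i) k := by
  obtain ⟨hweak, hu0, hG0, huloc, hG2⟩ := hu
  -- the cut-off function
  have hrlt : (0:ℝ) < (d:ℝ) + 2 := by positivity
  let ψ : ContDiffBump (0 : Euc d) := ⟨(d:ℝ) + 2, (d:ℝ) + 3, hrlt, by linarith⟩
  have hψ1 : ∀ x ∈ Metric.ball (0 : Euc d) ((d:ℝ) + 2), ψ x = 1 := fun x hx =>
    ψ.one_of_mem_closedBall (Metric.ball_subset_closedBall hx)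
  have hcube_ball : cube d ⊆ Metric.ball (0 : Euc d) ((d:ℝ) + 2) :=
    subset_trans (cube_subset_ball d) (Metric.closedBall_subset_ball (by linarith))
  -- generic processing of a trig test function
  have main : ∀ (tr : ℝ → ℝ) (tr' : ℝ → ℝ), ContDiff ℝ (⊤ : ℕ∞) tr →
      (∀ t, HasDerivAt tr (tr' t) t) →
      ∫ x in cube d, u x i * (tr' (thk k x) * (2 * π * (k j : ℝ))) =
        - ∫ x in cube d, tr (thk k x) * G x (i, j) := by
    intro tr tr' htr htr'
    set φ : Euc d → ℝ := fun y => ψ y * tr (thk k y) with hφ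
    have hφsmooth : ContDiff ℝ (⊤ : ℕ∞) φ :=
      ψ.contDiff.mul (htr.comp (contDiff_thk k))
    have hφsupp : HasCompactSupport φ := ψ.hasCompactSupport.mul_right
    have hid := hweak φ hφsmooth hφsupp (Set.subset_univ _) i j
    rw [Measure.restrict_univ] at hid
    -- reduce to the cube
    have hL : ∫ x, u x i * fderiv ℝ φ x (esingle j) =
        ∫ x in cube d, u x i * fderiv ℝ φ x (esingle j) := by
      refine (MeasureTheory.setIntegral_eq_integral_of_forall_compl_eq_zero fun x hx => ?_).symm
      rw [hu0 x hx]
      show (0:ℝ) * _ = 0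
      rw [zero_mul]
    have hR : ∫ x, φ x * G x (i, j) = ∫ x in cube d, φ x * G x (i, j) := by
      refine (MeasureTheory.setIntegral_eq_integral_of_forall_compl_eq_zero fun x hx => ?_).symm
      rw [hG0 x hx]
      show _ * (0:ℝ) = 0
      rw [mul_zero]
    rw [hL, hR] at hid
    -- on the cube, `φ` agrees with the pure trig function
    have hfder : ∀ x ∈ cube d, fderiv ℝ φ x (esingle j) =
        tr' (thk k x) * (2 * π * (k j : ℝ)) := by
      intro x hx
      have hev : φ =ᶠ[nhds x] fun y => tr (thk k y) := by
        refine Filter.eventuallyEq_of_mem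
          ((Metric.isOpen_ball).mem_nhds (hcube_ball hx)) fun y hy => ?_
        show ψ y * tr (thk k y) = tr (thk k y)
        rw [hψ1 y hy, one_mul]
      have hder : HasFDerivAt (fun y => tr (thk k y))
          ((tr' (thk k x)) • ((2 * π : ℝ) • Lk k)) x :=
        (htr' (thk k x)).comp_hasFDerivAt x (hasFDerivAt_thk k x)
      rw [hev.fderiv_eq, hder.fderiv]
      simp only [ContinuousLinearMap.coe_smul', Pi.smul_apply, smul_eq_mul]
      rw [Lk_esingle]
      try ring
    have hφeq : ∀ x ∈ cube d, φ x = tr (thk k x) := fun x hx => by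
      show ψ x * tr (thk k x) = tr (thk k x)
      rw [hψ1 x (hcube_ball hx), one_mul]
    calc ∫ x in cube d, u x i * (tr' (thk k x) * (2 * π * (k j : ℝ)))
        = ∫ x in cube d, u x i * fderiv ℝ φ x (esingle j) := by
          refine MeasureTheory.setIntegral_congr_fun (measurableSet_cube d) fun x hx => ?_
          rw [hfder x hx]
      _ = - ∫ x in cube d, φ x * G x (i, j) := hid
      _ = - ∫ x in cube d, tr (thk k x) * G x (i, j) := by
          congr 1
          refine MeasureTheory.setIntegral_congr_fun (measurableSet_cube d) fun x hx => ?_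
          rw [hφeq x hx]
  -- apply with cosine and sine
  have hint_u : Integrable (fun x => u x i) (volume.restrict (cube d)) :=
    integrable_comp_proj (integrableOn_u_comp huloc) i
  have hint_G : Integrable (fun x => G x (i, j)) (volume.restrict (cube d)) :=
    integrable_comp_proj' hG2 (i, j)
  set c : ℝ := 2 * π * (k j : ℝ) with hcdef
  have hC : ∫ x in cube d, Real.cos (thk k x) * G x (i, j) =
      c * ∫ x in cube d, Real.sin (thk k x) * u x i := by
    have h := main Real.cos (fun t => -Real.sin t) Real.contDiff_cos
      (fun t => Real.hasDerivAt_cos t)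
    have heq : ∀ x : Euc d, u x i * (-Real.sin (thk k x) * c) =
        -c * (Real.sin (thk k x) * u x i) := fun x => by rw [hcdef]; ring
    simp_rw [heq] at h
    rw [MeasureTheory.integral_const_mul] at h
    linarith
  have hD : ∫ x in cube d, Real.sin (thk k x) * G x (i, j) =
      -(c * ∫ x in cube d, Real.cos (thk k x) * u x i) := by
    have h := main Real.sin Real.cos Real.contDiff_sin
      (fun t => Real.hasDerivAt_sin t)
    have heq : ∀ x : Euc d, u x i * (Real.cos (thk k x) * c) =
        c * (Real.cos (thk k x) * u x i) := fun x => by rw [hcdef]; ring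
    simp_rw [heq] at h
    rw [MeasureTheory.integral_const_mul] at h
    linarith
  rw [fCoeffS_cos_sin _ hint_G k, fCoeffS_cos_sin _ hint_u k, hC, hD, hcdef]
  push_cast
  ring_nf
  rw [Complex.I_sq]
  ring


lemma integrable_mul_eK {f : Euc d → ℝ} (hf : Integrable f (volume.restrict (cube d)))
    (k : Fin d → ℤ) :
    Integrable (fun x => (f x : ℂ) * eK k x) (volume.restrict (cube d)) := by
  have h := (hf.ofReal (𝕜 := ℂ)).bdd_mul ((continuous_eK k).aestronglyMeasurable)
    (c := 1) (ae_of_all _ fun x => le_of_eq (norm_eK k x))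
  have h2 : (fun x : Euc d => (f x : ℂ) * eK k x) = fun x => eK k x * (f x : ℂ) :=
    funext fun x => mul_comm _ _
  rw [h2]
  exact h

lemma fCoeffS_sub {f g : Euc d → ℝ} (hf : Integrable f (volume.restrict (cube d)))
    (hg : Integrable g (volume.restrict (cube d))) (k : Fin d → ℤ) :
    fCoeffS (fun x => f x - g x) k = fCoeffS f k - fCoeffS g k := by
  rw [fCoeffS_eq, fCoeffS_eq, fCoeffS_eq,
    ← MeasureTheory.integral_sub (integrable_mul_eK hf (-k)) (integrable_mul_eK hg (-k))]
  refine MeasureTheory.integral_congr_ae (Filter.Eventually.of_forall fun x => ?_)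
  push_cast
  ring

lemma fCoeffS_zero_fun (k : Fin d → ℤ) : fCoeffS (fun _ : Euc d => (0:ℝ)) k = 0 := by
  rw [fCoeffS_eq]
  simp

lemma knorm_sq (k : Fin d → ℤ) : knorm k ^ 2 = ∑ i, ((k i : ℝ)) ^ 2 := by
  rw [knorm, Real.sq_sqrt]
  positivity

lemma knorm_sq_pos {k : Fin d → ℤ} (hk : k ≠ 0) : 0 < knorm k ^ 2 := by
  rw [knorm_sq]
  obtain ⟨i₀, hi₀⟩ : ∃ i, k i ≠ 0 := by
    by_contra h
    push_neg at h
    exact hk (funext h)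
  refine Finset.sum_pos' (fun i _ => sq_nonneg _) ⟨i₀, Finset.mem_univ i₀, ?_⟩
  have : ((k i₀ : ℝ)) ≠ 0 := Int.cast_ne_zero.mpr hi₀
  positivity

lemma scalar_ineq (K2 s κ br bi cr ci : ℝ) (hs : 0 ≤ s) (hK : K2 = κ^2 + s) (hK2 : 0 < K2) :
    s / K2 * (cr^2 + ci^2) ≤ ((κ*br - cr)^2 + (κ*bi - ci)^2) + (br^2 + bi^2) * s := by
  rw [div_mul_eq_mul_div, div_le_iff₀ hK2]
  subst hK
  nlinarith [sq_nonneg ((κ^2+s)*br - κ*cr), sq_nonneg ((κ^2+s)*bi - κ*ci)]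

lemma norm_sq_complex (z : ℂ) : ‖z‖ ^ 2 = z.re ^ 2 + z.im ^ 2 := by
  rw [Complex.sq_norm, Complex.normSq_apply]
  ring

/-- row inequality: for fixed `i`, the sum over `j` of `‖b κ_j - c_j‖²` (where the only
nonzero `c_j` is `c_i`) dominates the target diagonal term. -/
lemma row_bound (k : Fin d → ℤ) (hk : k ≠ 0) (i : Fin d) (b : ℂ) (c : Fin d → ℂ)
    (hc : ∀ j, j ≠ i → c j = 0) :
    (knorm k ^ 2 - ((k i : ℝ)) ^ 2) / knorm k ^ 2 * ‖c i‖ ^ 2 ≤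
      ∑ j, ‖b * ((k j : ℝ) : ℂ) - c j‖ ^ 2 := by
  classical
  have hK2 : 0 < knorm k ^ 2 := knorm_sq_pos hk
  set s : ℝ := knorm k ^ 2 - ((k i : ℝ)) ^ 2 with hsdef
  have hsum : ∑ j, ((k j : ℝ)) ^ 2 = knorm k ^ 2 := (knorm_sq k).symm
  have hself : ((k i : ℝ)) ^ 2 + ∑ j ∈ Finset.univ.erase i, ((k j : ℝ)) ^ 2 = knorm k ^ 2 := by
    rw [← hsum]
    exact Finset.add_sum_erase Finset.univ (fun j => ((k j : ℝ)) ^ 2) (Finset.mem_univ i)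
  have hs : 0 ≤ s := by
    rw [hsdef, ← hself]
    have : (0:ℝ) ≤ ∑ j ∈ Finset.univ.erase i, ((k j : ℝ)) ^ 2 :=
      Finset.sum_nonneg fun j _ => sq_nonneg _
    linarith
  -- split the sum over `j`
  have hsplit : ∑ j, ‖b * ((k j : ℝ) : ℂ) - c j‖ ^ 2 =
      ‖b * ((k i : ℝ) : ℂ) - c i‖ ^ 2 +
        ∑ j ∈ Finset.univ.erase i, ‖b * ((k j : ℝ) : ℂ)‖ ^ 2 := by
    rw [← Finset.add_sum_erase Finset.univ (fun j => ‖b * ((k j : ℝ) : ℂ) - c j‖ ^ 2)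
      (Finset.mem_univ i)]
    congr 1
    refine Finset.sum_congr rfl fun j hj => ?_
    rw [hc j (Finset.mem_erase.mp hj).1, sub_zero]
  have hnormmul : ∀ j, ‖b * ((k j : ℝ) : ℂ)‖ ^ 2 = (b.re^2 + b.im^2) * ((k j : ℝ))^2 := by
    intro j
    rw [norm_sq_complex]
    simp [Complex.mul_re, Complex.mul_im, Complex.ofReal_re, Complex.ofReal_im]
    ring
  have htail : ∑ j ∈ Finset.univ.erase i, ‖b * ((k j : ℝ) : ℂ)‖ ^ 2 =
      (b.re^2 + b.im^2) * s := by
    simp_rw [hnormmul]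
    rw [← Finset.mul_sum]
    congr 1
    rw [hsdef]
    linarith
  rw [hsplit, htail]
  have hre : (b * ((k i : ℝ) : ℂ) - c i).re = (k i : ℝ) * b.re - (c i).re := by
    simp [Complex.mul_re]
    ring
  have him : (b * ((k i : ℝ) : ℂ) - c i).im = (k i : ℝ) * b.im - (c i).im := by
    simp [Complex.mul_im]
    ring
  rw [norm_sq_complex, norm_sq_complex, hre, him]
  exact scalar_ineq (knorm k ^ 2) s ((k i : ℝ)) b.re b.im (c i).re (c i).im hs
    (by rw [hsdef]; ring) hK2


lemma ratio_nonneg (k : Fin d → ℤ) (j : Fin d) :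
    0 ≤ (knorm k ^ 2 - ((k j : ℝ)) ^ 2) / knorm k ^ 2 := by
  refine div_nonneg ?_ (sq_nonneg _)
  rw [knorm_sq]
  have h := Finset.single_le_sum (f := fun i => ((k i : ℝ)) ^ 2)
    (fun i _ => sq_nonneg _) (Finset.mem_univ j)
  linarith

end Stmt10Aux


/-- **Lemma (Fourier representation of the elastic energy)**: for `u ∈ H¹₀((0,1)^d;ℝ^d)`
and diagonal-matrix-valued `χ ∈ L²`, extended one-periodically,
`∫_Ω |∇u - χ|² dx ≥ |χ̂(0)|² + ∑_{k ≠ 0} ∑_j ((|k|² - k_j²)/|k|²) |χ̂_{jj}(k)|²`. -/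
theorem stmt10 (d : ℕ) (hd : 2 ≤ d) (u : Euc d → Euc d) (G : Euc d → Mtx d)
    (hu : MemH10 (cube d) u G) (χ : Euc d → Mtx d)
    (hχ : MemLp χ 2 (volume.restrict (cube d)))
    (hdiag : ∀ x, ∀ i j : Fin d, i ≠ j → χ x (i, j) = 0) :
    coeffSq χ 0 +
      (∑' k : Fin d → ℤ, Set.indicator {k : Fin d → ℤ | k ≠ 0}
        (fun k => ∑ j : Fin d,
          ((knorm k ^ 2 - ((k j : ℝ)) ^ 2) / knorm k ^ 2) *
            ‖fCoeffS (fun x => χ x (j, j)) k‖ ^ 2) k)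
      ≤ ∫ x in cube d, ‖G x - χ x‖ ^ 2    := by
  classical
  have hGa : ∀ a : Fin d × Fin d, Integrable (fun x => G x a) (volume.restrict (cube d)) :=
    fun a => Stmt10Aux.integrable_comp_proj' hu.2.2.2.2 a
  have hχa : ∀ a : Fin d × Fin d, Integrable (fun x => χ x a) (volume.restrict (cube d)) :=
    fun a => Stmt10Aux.integrable_comp_proj' hχ a
  have hdiff : MemLp (fun x => G x - χ x) 2 (volume.restrict (cube d)) := hu.2.2.2.2.sub hχ
  have hfa : ∀ a : Fin d × Fin d,
      MemLp (fun x => G x a - χ x a) 2 (volume.restrict (cube d)) := by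
    intro a
    have h := (EuclideanSpace.proj (𝕜 := ℝ) a).comp_memLp' hdiff
    have he : ((EuclideanSpace.proj (𝕜 := ℝ) a) ∘ fun x => G x - χ x) =
        fun x => G x a - χ x a := by
      funext x
      simp [Function.comp, PiLp.sub_apply]
    rwa [he] at h
  set F : (Fin d → ℤ) → ℝ :=
    fun k => ∑ a : Fin d × Fin d, ‖fCoeffS (fun x => G x a - χ x a) k‖ ^ 2 with hFdef
  have hIel : ∀ S : Finset (Fin d → ℤ),
      ∑ k ∈ S, F k ≤ ∫ x in cube d, ‖G x - χ x‖ ^ 2 := by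
    intro S
    rw [hFdef]
    rw [Finset.sum_comm]
    calc ∑ a : Fin d × Fin d, ∑ k ∈ S, ‖fCoeffS (fun x => G x a - χ x a) k‖ ^ 2
        ≤ ∑ a : Fin d × Fin d, ∫ x in cube d, (G x a - χ x a) ^ 2 :=
          Finset.sum_le_sum fun a _ => Stmt10Aux.bessel_scalar _ (hfa a) S
      _ = ∫ x in cube d, ∑ a : Fin d × Fin d, (G x a - χ x a) ^ 2 :=
          (MeasureTheory.integral_finset_sum _ fun a _ => (hfa a).integrable_sq).symm
      _ = ∫ x in cube d, ‖G x - χ x‖ ^ 2 := by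
          refine MeasureTheory.integral_congr_ae (Filter.Eventually.of_forall fun x => ?_)
          show (∑ a : Fin d × Fin d, (G x a - χ x a) ^ 2) = ‖G x - χ x‖ ^ 2
          rw [EuclideanSpace.norm_eq, Real.sq_sqrt (by positivity)]
          refine Finset.sum_congr rfl fun a _ => ?_
          rw [Real.norm_eq_abs, _root_.sq_abs, PiLp.sub_apply]
  have hcoeff_sub : ∀ (a : Fin d × Fin d) k, fCoeffS (fun x => G x a - χ x a) k =
      fCoeffS (fun x => G x a) k - fCoeffS (fun x => χ x a) k :=
    fun a k => Stmt10Aux.fCoeffS_sub (hGa a) (hχa a) k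
  have hgrad : ∀ (k : Fin d → ℤ) (i j : Fin d), fCoeffS (fun x => G x (i, j)) k =
      (2 * (Real.pi : ℂ) * Complex.I) * ((k j : ℤ) : ℂ) * fCoeffS (fun x => u x i) k :=
    fun k i j => Stmt10Aux.coeff_grad hu k i j
  have hoff : ∀ (i j : Fin d), i ≠ j → ∀ k, fCoeffS (fun x => χ x (i, j)) k = 0 := by
    intro i j hij k
    have h : (fun x => χ x (i, j)) = fun _ : Euc d => (0:ℝ) := funext fun x => hdiag x i j hij
    rw [h, Stmt10Aux.fCoeffS_zero_fun]
  have hgrad0 : ∀ a : Fin d × Fin d, fCoeffS (fun x => G x a) 0 = 0 := by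
    rintro ⟨i, j⟩
    rw [hgrad 0 i j]
    simp
  have hF0 : F 0 = coeffSq χ 0 := by
    rw [hFdef]
    show (∑ a : Fin d × Fin d, ‖fCoeffS (fun x => G x a - χ x a) 0‖ ^ 2) =
      ∑ a : Fin d × Fin d, ‖fCoeffS (fun x => χ x a) 0‖ ^ 2
    refine Finset.sum_congr rfl fun a _ => ?_
    rw [hcoeff_sub a 0, hgrad0 a, zero_sub, norm_neg]
  set g : (Fin d → ℤ) → ℝ := Set.indicator {k : Fin d → ℤ | k ≠ 0}
    (fun k => ∑ j : Fin d,
      ((knorm k ^ 2 - ((k j : ℝ)) ^ 2) / knorm k ^ 2) *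
        ‖fCoeffS (fun x => χ x (j, j)) k‖ ^ 2) with hgdef
  have hg0 : g 0 = 0 := Set.indicator_of_notMem (by simp) _
  have hFnonneg : ∀ k, 0 ≤ F k := fun k => Finset.sum_nonneg fun a _ => sq_nonneg _
  have hgle : ∀ k, g k ≤ F k := by
    intro k
    by_cases hk : k = 0
    · rw [hk, hg0]
      exact hFnonneg 0
    · rw [hgdef, Set.indicator_of_mem (show k ∈ {k : Fin d → ℤ | k ≠ 0} from hk)]
      have hFk : F k = ∑ i : Fin d, ∑ j : Fin d,
          ‖(2 * (Real.pi : ℂ) * Complex.I * fCoeffS (fun x => u x i) k) * (((k j : ℝ)) : ℂ)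
            - fCoeffS (fun x => χ x (i, j)) k‖ ^ 2 := by
        rw [hFdef]
        show (∑ a : Fin d × Fin d, ‖fCoeffS (fun x => G x a - χ x a) k‖ ^ 2) = _
        rw [Fintype.sum_prod_type]
        refine Finset.sum_congr rfl fun i _ => Finset.sum_congr rfl fun j _ => ?_
        rw [hcoeff_sub (i, j) k, hgrad k i j]
        have heq : (2 * (Real.pi : ℂ) * Complex.I) * ((k j : ℤ) : ℂ) *
            fCoeffS (fun x => u x i) k =
            (2 * (Real.pi : ℂ) * Complex.I * fCoeffS (fun x => u x i) k) *
              (((k j : ℝ)) : ℂ) := by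
          push_cast
          ring
        rw [heq]
      calc (∑ j : Fin d, ((knorm k ^ 2 - ((k j : ℝ)) ^ 2) / knorm k ^ 2) *
            ‖fCoeffS (fun x => χ x (j, j)) k‖ ^ 2)
          ≤ ∑ i : Fin d, ∑ j : Fin d,
            ‖(2 * (Real.pi : ℂ) * Complex.I * fCoeffS (fun x => u x i) k) *
              (((k j : ℝ)) : ℂ) - fCoeffS (fun x => χ x (i, j)) k‖ ^ 2 := by
            refine Finset.sum_le_sum fun i _ => ?_
            exact Stmt10Aux.row_bound k hk i
              (2 * (Real.pi : ℂ) * Complex.I * fCoeffS (fun x => u x i) k)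
              (fun j => fCoeffS (fun x => χ x (i, j)) k)
              (fun j hj => hoff i j (Ne.symm hj) k)
        _ = F k := hFk.symm
  have hgnonneg : ∀ k, 0 ≤ g k := by
    intro k
    rw [hgdef]
    refine Set.indicator_nonneg (fun k _ => ?_) k
    exact Finset.sum_nonneg fun j _ =>
      mul_nonneg (Stmt10Aux.ratio_nonneg k j) (sq_nonneg _)
  have hFsummable : Summable F :=
    summable_of_sum_le hFnonneg hIel
  have hgsummable : Summable g := Summable.of_nonneg_of_le hgnonneg hgle hFsummable
  have hmain : ∀ S : Finset (Fin d → ℤ),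
      ∑ k ∈ S, g k ≤ (∫ x in cube d, ‖G x - χ x‖ ^ 2) - coeffSq χ 0 := by
    intro S
    have h1 : ∑ k ∈ S.erase 0, g k = ∑ k ∈ S, g k := Finset.sum_erase S hg0
    have h2 : ∑ k ∈ S.erase 0, g k ≤ ∑ k ∈ S.erase 0, F k :=
      Finset.sum_le_sum fun k _ => hgle k
    have h3 : F 0 + ∑ k ∈ S.erase 0, F k = ∑ k ∈ insert 0 (S.erase 0), F k :=
      (Finset.sum_insert (Finset.notMem_erase 0 S)).symm
    have h4 := hIel (insert 0 (S.erase 0))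
    rw [← h3, hF0] at h4
    linarith
  have htsum : (∑' k, g k) ≤ (∫ x in cube d, ‖G x - χ x‖ ^ 2) - coeffSq χ 0 :=
    Summable.tsum_le_of_sum_le hgsummable hmain
  linarith

end
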